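/- Let Γ be a cancellation monoid with neutral element e, A = ⊕_{γ∈Γ} A_γ a Γ-graded ring, and 𝔐 the two-sided ideal of A generated by all non-invertible homogeneous elements. If 𝔐 is a proper ideal of A, then every homogeneous element a ∈ A_γ with a ∉ 𝔐 is invertible with homogeneous inverse, and 𝔐 is the unique maximal graded left, right and two-sided ideal of A: every proper graded left ideal, every proper graded right ideal and every proper graded two-sided ideal of A is contained in 𝔐. -/

import Mathlib

/-!
A homogeneous component of an element of a proper graded (left, right or two-sided) ideal
cannot be a unit, so it lies in `𝔐`, and hence so does their sum. Conversely a homogeneous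
`a ∉ 𝔐` is a unit, and its inverse `b` is homogeneous: if `b_δ` is a nonzero component of `b`,
then `a * b_δ` is a nonzero component of `1`, so `deg a + δ = 0` and `a * b_δ = 1`, whence
`b = b_δ`.
-/

section

variable {Γ : Type*} [AddCancelMonoid Γ] [DecidableEq Γ]
variable {A : Type*} [Ring A] (𝒜 : Γ → AddSubgroup A) [GradedRing 𝒜]

/-- A left ideal of `A` is graded if it contains all homogeneous components of each of
its elements (equivalently, it is generated by homogeneous elements). -/
def Ideal.IsGradedLeft (I : Ideal A) : Prop :=
  ∀ a ∈ I, ∀ γ : Γ, (DirectSum.decompose 𝒜 a γ : A) ∈ I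

/-- A right ideal of `A` (a submodule of `A` over `Aᵐᵒᵖ`) is graded if it contains all
homogeneous components of each of its elements. -/
def Ideal.IsGradedRight (I : Submodule Aᵐᵒᵖ A) : Prop :=
  ∀ a ∈ I, ∀ γ : Γ, (DirectSum.decompose 𝒜 a γ : A) ∈ I

/-- A two-sided ideal of `A` is graded if it contains all homogeneous components of each
of its elements. -/
def TwoSidedIdeal.IsGraded (I : TwoSidedIdeal A) : Prop :=
  ∀ a ∈ I, ∀ γ : Γ, (DirectSum.decompose 𝒜 a γ : A) ∈ I

theorem Submodule.mulOpposite_eq_top_of_isUnit_mem {R : Type*} [Semiring R] {I : Submodule Rᵐᵒᵖ R}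
    {x : R} (hx : x ∈ I) (h : IsUnit x) : I = ⊤ :=
  let ⟨y, hy⟩ := h.exists_right_inv
  eq_top_iff.2 fun z _ => by
    simpa [MulOpposite.smul_eq_mul_unop, ← mul_assoc, hy] using I.smul_mem (.op (y * z)) hx

theorem TwoSidedIdeal.eq_top_of_isUnit_mem {R : Type*} [Ring R] {I : TwoSidedIdeal R} {x : R}
    (hx : x ∈ I) (h : IsUnit x) : I = ⊤ :=
  let ⟨y, hy⟩ := h.exists_right_inv
  I.eq_top (hy ▸ I.mul_mem_right x y hx)

section

variable {ι R σ : Type*} [SetLike σ R]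

theorem Units.isHomogeneousElem_inv [DecidableEq ι] [AddLeftCancelMonoid ι] [Semiring R]
    [AddSubmonoidClass σ R] (𝒜 : ι → σ) [GradedRing 𝒜] {u : Rˣ}
    (hu : SetLike.IsHomogeneousElem 𝒜 (u : R)) :
    SetLike.IsHomogeneousElem 𝒜 (↑u⁻¹ : R) := by
  obtain ⟨γ, hγ⟩ := hu
  set b : R := ↑u⁻¹
  by_cases hb : b = 0
  · exact ⟨γ, hb ▸ zero_mem _⟩
  obtain ⟨δ, hδ⟩ : ∃ δ, (DirectSum.decompose 𝒜 b δ : R) ≠ 0 := by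
    by_contra! h
    exact hb <| (DirectSum.decompose 𝒜).injective <|
      DFinsupp.ext fun δ => Subtype.ext <| by simpa using h δ
  have hcomp : (DirectSum.decompose 𝒜 (1 : R) (γ + δ) : R) = u * DirectSum.decompose 𝒜 b δ := by
    rw [← u.mul_inv, DirectSum.coe_decompose_mul_add_of_left_mem 𝒜 hγ]
  -- `1` is concentrated in degree `0`, so its nonzero component `u * b_δ` sits there.
  have hdeg : γ + δ = 0 := by
    by_contra hne
    rw [DirectSum.decompose_of_mem_ne 𝒜 (SetLike.one_mem_graded 𝒜) (Ne.symm hne), eq_comm,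
      u.mul_right_eq_zero] at hcomp
    exact hδ hcomp
  rw [hdeg, DirectSum.decompose_of_mem_same 𝒜 (SetLike.one_mem_graded 𝒜)] at hcomp
  have hb_eq : b = DirectSum.decompose 𝒜 b δ := by
    rw [← one_mul (DirectSum.decompose 𝒜 b δ : R), ← u.inv_mul, mul_assoc, ← hcomp, mul_one]
  exact ⟨δ, hb_eq ▸ SetLike.coe_mem _⟩

variable [Ring R] (𝒜 : ι → σ)

def homogeneousNonunits : Set R := {a | (a ≠ 0 ∧ ∃ γ, a ∈ 𝒜 γ) ∧ ¬IsUnit a}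

theorem mem_span_homogeneousNonunits_of_not_isUnit {γ : ι} {a : R} (ha : a ∈ 𝒜 γ)
    (hu : ¬IsUnit a) : a ∈ TwoSidedIdeal.span (homogeneousNonunits 𝒜) := by
  by_cases h0 : a = 0
  · exact h0 ▸ zero_mem _
  · exact TwoSidedIdeal.subset_span ⟨⟨h0, γ, ha⟩, hu⟩

variable [DecidableEq ι] [AddMonoid ι] [AddSubmonoidClass σ R] [GradedRing 𝒜]

theorem mem_span_homogeneousNonunits_of_forall_not_isUnit {x : R}
    (hx : ∀ γ, ¬IsUnit (DirectSum.decompose 𝒜 x γ : R)) :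
    x ∈ TwoSidedIdeal.span (homogeneousNonunits 𝒜) := by
  classical
  rw [← DirectSum.sum_support_decompose 𝒜 x]
  exact sum_mem fun γ _ =>
    mem_span_homogeneousNonunits_of_not_isUnit 𝒜 (SetLike.coe_mem _) (hx γ)

theorem subset_span_homogeneousNonunits {I : Set R}
    (hgraded : ∀ x ∈ I, ∀ γ, (DirectSum.decompose 𝒜 x γ : R) ∈ I)
    (hunit : ∀ x ∈ I, ¬IsUnit x) : I ⊆ TwoSidedIdeal.span (homogeneousNonunits 𝒜) :=
  fun x hx => mem_span_homogeneousNonunits_of_forall_not_isUnit 𝒜 fun γ =>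
    hunit _ (hgraded x hx γ)

end

theorem span_nonunit_homogeneous_is_unique_maximal_graded_ideal :
    (∀ (γ : Γ) (a : A), a ∈ 𝒜 γ → a ≠ 0 →
        a ∉ TwoSidedIdeal.span {a : A | (a ≠ 0 ∧ ∃ γ : Γ, a ∈ 𝒜 γ) ∧ ¬IsUnit a} →
        ∃ b : A, (b ≠ 0 ∧ ∃ γ' : Γ, b ∈ 𝒜 γ') ∧ a * b = 1 ∧ b * a = 1) ∧
    (∀ I : Ideal A, Ideal.IsGradedLeft 𝒜 I → I ≠ ⊤ → ∀ x ∈ I,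
        x ∈ TwoSidedIdeal.span {a : A | (a ≠ 0 ∧ ∃ γ : Γ, a ∈ 𝒜 γ) ∧ ¬IsUnit a}) ∧
    (∀ I : Submodule Aᵐᵒᵖ A, Ideal.IsGradedRight 𝒜 I → I ≠ ⊤ → ∀ x ∈ I,
        x ∈ TwoSidedIdeal.span {a : A | (a ≠ 0 ∧ ∃ γ : Γ, a ∈ 𝒜 γ) ∧ ¬IsUnit a}) ∧
    (∀ I : TwoSidedIdeal A, TwoSidedIdeal.IsGraded 𝒜 I → I ≠ ⊤ →
        I ≤ TwoSidedIdeal.span {a : A | (a ≠ 0 ∧ ∃ γ : Γ, a ∈ 𝒜 γ) ∧ ¬IsUnit a}) := by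
  refine ⟨fun γ a ha ha0 haM => ?_, fun I hI hI' => ?_, fun I hI hI' => ?_, fun I hI hI' => ?_⟩
  · have : Nontrivial A := nontrivial_of_ne a 0 ha0
    obtain ⟨u, rfl⟩ : IsUnit a :=
      not_not.1 fun hu => haM (mem_span_homogeneousNonunits_of_not_isUnit 𝒜 ha hu)
    exact ⟨↑u⁻¹, ⟨u⁻¹.ne_zero, Units.isHomogeneousElem_inv 𝒜 ⟨γ, ha⟩⟩, u.mul_inv, u.inv_mul⟩
  · exact subset_span_homogeneousNonunits 𝒜 hI fun x hx hu => hI' (I.eq_top_of_isUnit_mem hx hu)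
  · exact subset_span_homogeneousNonunits 𝒜 hI
      fun x hx hu => hI' (Submodule.mulOpposite_eq_top_of_isUnit_mem hx hu)
  · exact subset_span_homogeneousNonunits 𝒜 hI
      fun x hx hu => hI' (TwoSidedIdeal.eq_top_of_isUnit_mem hx hu)

end
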